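/- Let k be a field, (A,·) an associative k-algebra, α : A → A a linear map, and λ ∈ k. Then for either choice of sign: α satisfies α(x)·α(y) − α(α(x)·y + x·α(y) + λ x·y) = (−1 ± λ) x·y for all x, y ∈ A if and only if α ± id_A is a Rota-Baxter operator of weight λ ∓ 2 on A (i.e. with + in the hypothesis, α + id_A is Rota-Baxter of weight λ − 2; with −, α − id_A is Rota-Baxter of weight λ + 2). -/

import Mathlib

/-!
For `P = α + ε • id` with `ε² = 1`, the Rota–Baxter equation of `P` at weight `λ - 2ε` and the
identity `α x * α y - α (α x * y + x * α y + λ • (x * y)) = (-1 + ελ) • (x * y)` have the same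
defect, because all terms involving `ε` cancel except `ε² • (x * y)`. Take `ε = ±1`.
-/

section RotaBaxter

variable {k A : Type*} [CommRing k] [NonUnitalRing A] [Module k A]

def IsRotaBaxter (P : A →ₗ[k] A) (μ : k) : Prop :=
  ∀ x y, P x * P y = P (P x * y) + P (x * P y) + μ • P (x * y)

variable [SMulCommClass k A A] [IsScalarTower k A A]

theorem rotaBaxter_defect_of_apply_eq_add_smul {α P : A →ₗ[k] A} {ε : k}
    (hP : ∀ z, P z = α z + ε • z) (hε : ε * ε = 1) (lam : k) (x y : A) :
    P x * P y - (P (P x * y) + P (x * P y) + (lam - 2 * ε) • P (x * y)) =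
      α x * α y - α (α x * y + x * α y + lam • (x * y)) - (-1 + ε * lam) • (x * y) := by
  simp only [hP, map_add, map_smul, add_mul, mul_add, smul_mul_assoc, mul_smul_comm, smul_add,
    smul_smul]
  linear_combination (norm := module) hε • (x * y)

theorem isRotaBaxter_iff_of_apply_eq_add_smul {α P : A →ₗ[k] A} {ε : k}
    (hP : ∀ z, P z = α z + ε • z) (hε : ε * ε = 1) (lam : k) :
    IsRotaBaxter P (lam - 2 * ε) ↔
      ∀ x y, α x * α y - α (α x * y + x * α y + lam • (x * y)) = (-1 + ε * lam) • (x * y) := by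
  refine forall₂_congr fun x y => ?_
  rw [← sub_eq_zero, rotaBaxter_defect_of_apply_eq_add_smul hP hε, sub_eq_zero]

end RotaBaxter

theorem stmt7 {k A : Type} [Field k]
    [NonUnitalRing A] [Module k A] [SMulCommClass k A A] [IsScalarTower k A A]
    (α : A →ₗ[k] A) (lam : k) :
    ((∀ x y : A,
        α x * α y - α (α x * y + x * α y + lam • (x * y)) = (-1 + lam) • (x * y)) ↔
      (∀ x y : A,
        (α x + x) * (α y + y) =
          (α ((α x + x) * y) + (α x + x) * y) + (α (x * (α y + y)) + x * (α y + y)) +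
            (lam - 2) • (α (x * y) + x * y))) ∧
    ((∀ x y : A,
        α x * α y - α (α x * y + x * α y + lam • (x * y)) = (-1 - lam) • (x * y)) ↔
      (∀ x y : A,
        (α x - x) * (α y - y) =
          (α ((α x - x) * y) - (α x - x) * y) + (α (x * (α y - y)) - x * (α y - y)) +
            (lam + 2) • (α (x * y) - x * y))) := by
  have plus := isRotaBaxter_iff_of_apply_eq_add_smul (α := α) (P := α + LinearMap.id) (ε := 1)
    (fun z => by simp) (mul_one 1) lam
  have minus := isRotaBaxter_iff_of_apply_eq_add_smul (α := α) (P := α - LinearMap.id) (ε := -1)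
    (fun z => by simp [sub_eq_add_neg]) (by norm_num) lam
  simp only [IsRotaBaxter, LinearMap.add_apply, LinearMap.sub_apply, LinearMap.id_apply, mul_one,
    one_mul, mul_neg, neg_mul, sub_neg_eq_add, ← sub_eq_add_neg] at plus minus
  exact ⟨plus.symm, minus.symm⟩
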